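/- The pair (λ*, μ*) is the unique maximizer of the dual problem: μ* ≥ 0, and for every λ ∈ ℝ and μ ≥ 0 one has −½(v − λc + μeₙ)^⊤D⁻¹(v − λc + μeₙ) ≤ −½(v − λ*c + μ*eₙ)^⊤D⁻¹(v − λ*c + μ*eₙ), with equality only if (λ,μ) = (λ*,μ*). -/
import Mathlib


open Finset

noncomputable section

namespace Stmt3

/-- The last index of `Fin (n+2)`. -/
def lastIdx (n : ℕ) : Fin (n + 2) := Fin.last (n + 1)

variable {n : ℕ}

/-- The `n`-th standard basis vector `eₙ`. -/
def eVec (n : ℕ) : Fin (n + 2) → ℝ := fun i => if i = lastIdx n then 1 else 0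

/-- `c^⊤ D⁻¹ v` for the diagonal matrix `D = diag d`. -/
def cDv (d v c : Fin (n + 2) → ℝ) : ℝ := ∑ i, c i * v i / d i

/-- `c^⊤ D⁻¹ c` for the diagonal matrix `D = diag d`. -/
def cDc (d c : Fin (n + 2) → ℝ) : ℝ := ∑ i, c i * c i / d i

/-- The indicator `1_A`. -/
def indA (d v c : Fin (n + 2) → ℝ) : ℝ :=
  if v (lastIdx n) - cDv d v c / cDc d c * c (lastIdx n) < 0 then 1 else 0

/-- `λ*`. -/
def lamStar (d v c : Fin (n + 2) → ℝ) : ℝ :=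
  (cDv d v c - c (lastIdx n) * v (lastIdx n) / d (lastIdx n) * indA d v c) /
    (cDc d c - c (lastIdx n) ^ 2 / d (lastIdx n) * indA d v c)

/-- `μ* = max (-(vₙ - λ* cₙ)) 0`. -/
def muStar (d v c : Fin (n + 2) → ℝ) : ℝ :=
  max (-(v (lastIdx n) - lamStar d v c * c (lastIdx n))) 0

/-- The dual objective `q(λ,μ) = -½ (v - λc + μeₙ)^⊤ D⁻¹ (v - λc + μeₙ)`. -/
def q (d v c : Fin (n + 2) → ℝ) (lam mu : ℝ) : ℝ :=
  -(1 / 2) * ∑ i, (v i - lam * c i + mu * eVec n i) ^ 2 / d i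

/-- `(λ*, μ*)` is the unique maximizer of the dual problem. -/
theorem dual_unique_maximizer
    (n : ℕ) (d v c : Fin (n + 2) → ℝ)
    (hd : ∀ i, 0 < d i)
    (hc : ∃ i : Fin (n + 2), i ≠ lastIdx n ∧ c i ≠ 0) :
    0 ≤ muStar d v c ∧
    (∀ lam mu : ℝ, 0 ≤ mu →
      q d v c lam mu ≤ q d v c (lamStar d v c) (muStar d v c) ∧
      (q d v c lam mu = q d v c (lamStar d v c) (muStar d v c) →
        lam = lamStar d v c ∧ mu = muStar d v c)) := by
  classical
  obtain ⟨j, hjN, hcj⟩ := hc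
  have hdN : (0:ℝ) < d (lastIdx n) := hd _
  have hdN' : d (lastIdx n) ≠ 0 := ne_of_gt hdN
  have hcDc : 0 < cDc d c := by
    apply Finset.sum_pos'
    · intro i _; exact div_nonneg (mul_self_nonneg _) (hd i).le
    · exact ⟨j, Finset.mem_univ j, div_pos (mul_self_pos.mpr hcj) (hd j)⟩
  have hTsum : cDc d c - c (lastIdx n) ^ 2 / d (lastIdx n)
      = ∑ i ∈ Finset.univ.erase (lastIdx n), c i * c i / d i := by
    have h := Finset.sum_erase_add Finset.univ (fun i => c i * c i / d i)
      (Finset.mem_univ (lastIdx n))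
    have h2 : cDc d c = (∑ i ∈ Finset.univ.erase (lastIdx n), c i * c i / d i)
        + c (lastIdx n) * c (lastIdx n) / d (lastIdx n) := h.symm
    rw [h2, sq]; ring
  have hT : 0 < cDc d c - c (lastIdx n) ^ 2 / d (lastIdx n) := by
    rw [hTsum]
    apply Finset.sum_pos'
    · intro i _; exact div_nonneg (mul_self_nonneg _) (hd i).le
    · exact ⟨j, Finset.mem_erase.mpr ⟨hjN, Finset.mem_univ j⟩,
        div_pos (mul_self_pos.mpr hcj) (hd j)⟩
  set L := lamStar d v c with hLdef
  set M := muStar d v c with hMdef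
  have hM : M = max (-(v (lastIdx n) - L * c (lastIdx n))) 0 := rfl
  have hstat : cDv d v c - L * cDc d c + M * (c (lastIdx n) / d (lastIdx n)) = 0 := by
    by_cases hA : v (lastIdx n) - cDv d v c / cDc d c * c (lastIdx n) < 0
    · have hL1 : L = (cDv d v c - c (lastIdx n) * v (lastIdx n) / d (lastIdx n)) /
          (cDc d c - c (lastIdx n) ^ 2 / d (lastIdx n)) := by
        simp only [hLdef, lamStar, indA, if_pos hA, mul_one]
      have h1 : v (lastIdx n) * cDc d c < cDv d v c * c (lastIdx n) := by
        have h2 := mul_lt_mul_of_pos_right (sub_neg.mp hA) hcDc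
        have h3 : cDv d v c / cDc d c * c (lastIdx n) * cDc d c
            = cDv d v c * c (lastIdx n) := by
          field_simp
        linarith
      have ht : v (lastIdx n) - L * c (lastIdx n) < 0 := by
        rw [hL1, sub_neg, div_mul_eq_mul_div, lt_div_iff₀ hT]
        have hdiv : c (lastIdx n) * v (lastIdx n) / d (lastIdx n) * c (lastIdx n)
            = c (lastIdx n) ^ 2 / d (lastIdx n) * v (lastIdx n) := by
          rw [sq]; ring
        nlinarith [h1]
      have hMt : M = -(v (lastIdx n) - L * c (lastIdx n)) := by
        rw [hM, max_eq_left (by linarith)]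
      have hkey : cDv d v c - L * cDc d c +
          (-(v (lastIdx n) - L * c (lastIdx n))) * (c (lastIdx n) / d (lastIdx n))
          = (cDv d v c - c (lastIdx n) * v (lastIdx n) / d (lastIdx n))
            - L * (cDc d c - c (lastIdx n) ^ 2 / d (lastIdx n)) := by
        rw [sq]; field_simp; ring
      rw [hMt, hkey, hL1, div_mul_cancel₀ _ (ne_of_gt hT), sub_self]
    · have hL0 : L = cDv d v c / cDc d c := by
        simp only [hLdef, lamStar, indA, if_neg hA, mul_zero, sub_zero]
      have ht : 0 ≤ v (lastIdx n) - L * c (lastIdx n) := by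
        rw [hL0]; linarith [not_lt.mp hA]
      have hM0 : M = 0 := by rw [hM, max_eq_right (by linarith)]
      rw [hM0, hL0, zero_mul, add_zero, div_mul_cancel₀ _ (ne_of_gt hcDc), sub_self]
  set r : Fin (n + 2) → ℝ := fun i => v i - L * c i + M * eVec n i with hrdef
  have heN : eVec n (lastIdx n) = 1 := by simp [eVec]
  have hrN : r (lastIdx n) = max (v (lastIdx n) - L * c (lastIdx n)) 0 := by
    simp only [hrdef, heN, hM]
    rcases le_total (v (lastIdx n) - L * c (lastIdx n)) 0 with h | h
    · rw [max_eq_left (neg_nonneg.mpr h), max_eq_right h]; ring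
    · rw [max_eq_right (neg_nonpos.mpr h), max_eq_left h]; ring
  have hrN0 : 0 ≤ r (lastIdx n) := hrN ▸ le_max_right _ _
  have hMrN : M * r (lastIdx n) = 0 := by
    rcases le_total (v (lastIdx n) - L * c (lastIdx n)) 0 with h | h
    · rw [hrN, max_eq_right h, mul_zero]
    · rw [hM, max_eq_right (neg_nonpos.mpr h), zero_mul]
  have hsum_rc : (∑ i, r i * c i / d i) = 0 := by
    have h1 : ∀ i ∈ Finset.univ, r i * c i / d i
        = c i * v i / d i - L * (c i * c i / d i)
          + M * (if i = lastIdx n then c i / d i else 0) := by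
      intro i _
      simp only [hrdef, eVec]
      split_ifs <;> ring
    rw [Finset.sum_congr rfl h1, Finset.sum_add_distrib, Finset.sum_sub_distrib,
      ← Finset.mul_sum, ← Finset.mul_sum, Finset.sum_ite_eq' Finset.univ]
    simp only [Finset.mem_univ, if_true]
    exact hstat
  have hsum_re : (∑ i, r i * eVec n i / d i) = r (lastIdx n) / d (lastIdx n) := by
    have h1 : ∀ i ∈ Finset.univ, r i * eVec n i / d i
        = if i = lastIdx n then r i / d i else 0 := by
      intro i _
      simp only [eVec]
      split_ifs with h
      · ring
      · simp
    rw [Finset.sum_congr rfl h1, Finset.sum_ite_eq' Finset.univ]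
    simp
  have hrsum : (∑ i, (v i - L * c i + M * eVec n i) ^ 2 / d i) = ∑ i, r i ^ 2 / d i := rfl
  have hdecomp : ∀ lam mu : ℝ,
      (∑ i, (v i - lam * c i + mu * eVec n i) ^ 2 / d i)
      = (∑ i, r i ^ 2 / d i)
        + (2 * (mu - M) * (r (lastIdx n) / d (lastIdx n))
          + ∑ i, ((lam - L) * c i - (mu - M) * eVec n i) ^ 2 / d i) := by
    intro lam mu
    have h1 : ∀ i ∈ Finset.univ, (v i - lam * c i + mu * eVec n i) ^ 2 / d i
        = r i ^ 2 / d i + (-2 * (lam - L)) * (r i * c i / d i)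
          + (2 * (mu - M)) * (r i * eVec n i / d i)
          + ((lam - L) * c i - (mu - M) * eVec n i) ^ 2 / d i := by
      intro i _
      simp only [hrdef]
      ring
    rw [Finset.sum_congr rfl h1, Finset.sum_add_distrib, Finset.sum_add_distrib,
      Finset.sum_add_distrib, ← Finset.mul_sum, ← Finset.mul_sum, hsum_rc, hsum_re]
    ring
  constructor
  · exact le_max_right _ _
  · intro lam mu hmu
    have hQ0 : 0 ≤ ∑ i, ((lam - L) * c i - (mu - M) * eVec n i) ^ 2 / d i :=
      Finset.sum_nonneg fun i _ => div_nonneg (sq_nonneg _) (hd i).le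
    have hb0 : 0 ≤ (mu - M) * (r (lastIdx n) / d (lastIdx n)) := by
      have h3 : (mu - M) * (r (lastIdx n) / d (lastIdx n))
          = mu * r (lastIdx n) / d (lastIdx n) := by
        rw [← mul_div_assoc, sub_mul, hMrN, sub_zero]
      rw [h3]
      exact div_nonneg (mul_nonneg hmu hrN0) hdN.le
    have hmain := hdecomp lam mu
    constructor
    · simp only [q]
      rw [hrsum]
      linarith
    · intro heq
      simp only [q] at heq
      rw [hrsum] at heq
      have hzero : 2 * (mu - M) * (r (lastIdx n) / d (lastIdx n))
          + (∑ i, ((lam - L) * c i - (mu - M) * eVec n i) ^ 2 / d i) = 0 := by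
        linarith
      have hQz : (∑ i, ((lam - L) * c i - (mu - M) * eVec n i) ^ 2 / d i) = 0 := by
        linarith
      have hterm := (Finset.sum_eq_zero_iff_of_nonneg
        (fun i _ => div_nonneg (sq_nonneg _) (hd i).le)).mp hQz
      have hej : eVec n j = 0 := by simp [eVec, hjN]
      have hj2 := hterm j (Finset.mem_univ j)
      rw [hej] at hj2
      have hnum : ((lam - L) * c j - (mu - M) * 0) ^ 2 = 0 := by
        rcases div_eq_zero_iff.mp hj2 with h | h
        · exact h
        · exact absurd h (ne_of_gt (hd j))
      have hlam : lam = L := by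
        have h4 : (lam - L) * c j = 0 := by
          have h5 := pow_eq_zero_iff (n := 2) (by norm_num) |>.mp hnum
          simpa using h5
        rcases mul_eq_zero.mp h4 with h | h
        · linarith [sub_eq_zero.mp h]
        · exact absurd h hcj
      have hN2 := hterm (lastIdx n) (Finset.mem_univ _)
      rw [heN] at hN2
      have hnumN : ((lam - L) * c (lastIdx n) - (mu - M) * 1) ^ 2 = 0 := by
        rcases div_eq_zero_iff.mp hN2 with h | h
        · exact h
        · exact absurd h hdN'
      have hmu2 : mu = M := by
        have h5 : (lam - L) * c (lastIdx n) - (mu - M) * 1 = 0 :=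
          pow_eq_zero_iff (n := 2) (by norm_num) |>.mp hnumN
        have h6 : lam - L = 0 := by rw [hlam]; ring
        rw [h6, zero_mul, mul_one] at h5
        linarith
      exact ⟨hlam, hmu2⟩

end Stmt3
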